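/- Let n ≥ 2, ε ≥ 0, and let W_1, …, W_n be positive reals. Let Ŵ_1 ≤ Ŵ_2 ≤ ⋯ ≤ Ŵ_n be reals with W_i ≤ Ŵ_i ≤ W_i + ε for every i ∈ [n]. Apply the rounding procedure to Ŵ_1,…,Ŵ_n: let k be the largest index that is good for Ŵ, set D̂' = Σ_{i=1}^k Ŵ_i and Ĉ' = Σ_{i=1}^k 1/Ŵ_i, and define q̂_i = (D̂'/Ŵ_i − (k−2))/(D̂'Ĉ' − k(k−2)) for i ≤ k and q̂_i = 0 for i > k. Then for every i* ∈ [n], Σ_{i≠i*} q̂_i·(W_{i*} + W_i) ≤ (2 − 2/n)·W_{i*} + 2ε. (Lemma 3.4 / Step 3, robustness of the rounding to noisy max semi-distances.) -/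

import Mathlib

/-!
The rounding weights are `q̂ i = (D̂'/Ŵ i − (k−2))/Δ` with `Δ = D̂'Ĉ' − k(k−2)`, so that
`Σ q̂ i = 1` and `Σ q̂ i Ŵ i = 2D̂'/Δ`. Hence for `i* < k` the sum over `i ≠ i*` of
`q̂ i (Ŵ i* + Ŵ i)` is exactly `(1 + 2(k−2)/Δ) Ŵ i*`, and for `i* ≥ k` it is
`Ŵ i* + 2D̂'/Δ`, which is no larger because maximality of `k` and monotonicity give
`D̂' ≤ (k−2) Ŵ i*`. Cauchy–Schwarz gives `Δ ≥ 2k`, so `1 + 2(k−2)/Δ ≤ 2 − 2/k ≤ 2 − 2/n`.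
Goodness of `k` makes `q̂` nonnegative, so replacing `W` by `Ŵ ≤ W + ε` costs at most `2ε`.
-/

/-- An index `k` (number of hypotheses considered, indices `0, …, k−1`) is *good*
for the weights `W` if `(k−3)·W j ≤ Σ_{i < k, i ≠ j} W i` for every `j < k`. -/
def IsGoodIndex (W : ℕ → ℝ) (k : ℕ) : Prop :=
  ∀ j ∈ Finset.range k, ((k : ℝ) - 3) * W j ≤ ∑ i ∈ (Finset.range k).erase j, W i

open Finset

theorem sq_card_le_sum_mul_sum_inv {ι : Type*} (s : Finset ι) {w : ι → ℝ}
    (hw : ∀ i ∈ s, 0 < w i) : (#s : ℝ) ^ 2 ≤ (∑ i ∈ s, w i) * ∑ i ∈ s, (w i)⁻¹ := by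
  simpa using sum_sq_le_sum_mul_sum_of_sq_le_mul s (r := fun _ => 1)
    (fun i hi => (hw i hi).le) (fun i hi => (inv_pos.2 (hw i hi)).le)
    (fun i hi => by rw [one_pow, mul_inv_cancel₀ (hw i hi).ne'])

noncomputable def roundingDenom (w : ℕ → ℝ) (k : ℕ) : ℝ :=
  (∑ i ∈ range k, w i) * (∑ i ∈ range k, (w i)⁻¹) - k * ((k : ℝ) - 2)

noncomputable def roundingProb (w : ℕ → ℝ) (k i : ℕ) : ℝ :=
  if i < k then ((∑ j ∈ range k, w j) / w i - ((k : ℝ) - 2)) / roundingDenom w k else 0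

section

variable {w : ℕ → ℝ} {k : ℕ}

theorem isGoodIndex_iff :
    IsGoodIndex w k ↔ ∀ j < k, ((k : ℝ) - 2) * w j ≤ ∑ i ∈ range k, w i := by
  refine forall_congr' fun j => ?_
  rw [mem_range]
  refine imp_congr_right fun hj => ?_
  rw [sum_erase_eq_sub (mem_range.2 hj)]
  constructor <;> intro h <;> linarith

theorem isGoodIndex_of_le_three (hw : ∀ i < k, 0 ≤ w i) (hk : k ≤ 3) : IsGoodIndex w k :=
  fun j hj => by
    have hk' : (k : ℝ) ≤ 3 := by exact_mod_cast hk
    calc ((k : ℝ) - 3) * w j ≤ 0 :=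
          mul_nonpos_of_nonpos_of_nonneg (by linarith) (hw j (mem_range.1 hj))
      _ ≤ _ := sum_nonneg fun i hi => hw i (mem_range.1 (mem_of_mem_erase hi))

theorem sum_range_lt_of_not_isGoodIndex_succ (hk : 1 ≤ k) (hmono : ∀ i ≤ k, w i ≤ w k)
    (h : ¬ IsGoodIndex w (k + 1)) : ∑ i ∈ range k, w i < ((k : ℝ) - 2) * w k := by
  simp only [isGoodIndex_iff, not_forall, not_le, sum_range_succ, Nat.cast_succ] at h
  obtain ⟨m, hm, hlt⟩ := h
  have hk' : (0 : ℝ) ≤ k - 1 := by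
    have : (1 : ℝ) ≤ k := by exact_mod_cast hk
    linarith
  nlinarith [mul_le_mul_of_nonneg_left (hmono m (Nat.lt_succ_iff.1 hm)) hk']

theorem two_mul_le_roundingDenom (hw : ∀ i < k, 0 < w i) : 2 * (k : ℝ) ≤ roundingDenom w k := by
  have := sq_card_le_sum_mul_sum_inv (range k) fun i hi => hw i (mem_range.1 hi)
  rw [card_range] at this
  unfold roundingDenom
  nlinarith

theorem roundingDenom_pos (hw : ∀ i < k, 0 < w i) (hk : 0 < k) : 0 < roundingDenom w k := by
  have : (0 : ℝ) < k := by exact_mod_cast hk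
  linarith [two_mul_le_roundingDenom hw]

theorem two_mul_sub_two_div_roundingDenom_le (hw : ∀ i < k, 0 < w i) (hk : 2 ≤ k) :
    2 * ((k : ℝ) - 2) / roundingDenom w k ≤ 1 - 2 / k := by
  have hk' : (2 : ℝ) ≤ k := by exact_mod_cast hk
  calc 2 * ((k : ℝ) - 2) / roundingDenom w k ≤ 2 * ((k : ℝ) - 2) / (2 * k) :=
        div_le_div_of_nonneg_left (by linarith) (by positivity) (two_mul_le_roundingDenom hw)
    _ = 1 - 2 / k := by field_simp

theorem roundingProb_eq_zero {i : ℕ} (hi : k ≤ i) : roundingProb w k i = 0 :=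
  if_neg (not_lt.2 hi)

theorem roundingProb_nonneg (hw : ∀ i < k, 0 < w i) (hgood : IsGoodIndex w k) (i : ℕ) :
    0 ≤ roundingProb w k i := by
  unfold roundingProb
  split_ifs with hi
  · refine div_nonneg ?_ (by linarith [two_mul_le_roundingDenom hw, (k.cast_nonneg : (0 : ℝ) ≤ k)])
    rw [sub_nonneg, le_div_iff₀ (hw i hi)]
    exact isGoodIndex_iff.1 hgood i hi
  · exact le_rfl

theorem roundingProb_mul_self {i : ℕ} (hi : i < k) (hwi : w i ≠ 0) :
    roundingProb w k i * w i =
      (∑ j ∈ range k, w j - ((k : ℝ) - 2) * w i) / roundingDenom w k := by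
  rw [roundingProb, if_pos hi]
  field_simp

theorem sum_roundingProb_mul_add (hw : ∀ i < k, 0 < w i) (hk : 0 < k) (x : ℝ) :
    ∑ i ∈ range k, roundingProb w k i * (x + w i) =
      x + 2 * (∑ i ∈ range k, w i) / roundingDenom w k := by
  have hΔ := (roundingDenom_pos hw hk).ne'
  have hsum : ∑ i ∈ range k, roundingProb w k i = 1 := by
    calc ∑ i ∈ range k, roundingProb w k i
        = ∑ i ∈ range k, ((∑ j ∈ range k, w j) * (w i)⁻¹ - ((k : ℝ) - 2)) / roundingDenom w k :=
          sum_congr rfl fun i hi => by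
            rw [roundingProb, if_pos (mem_range.1 hi), div_eq_mul_inv _ (w i)]
      _ = 1 := by
          rw [← sum_div, sum_sub_distrib, ← mul_sum, sum_const, card_range, nsmul_eq_mul,
            div_eq_one_iff_eq hΔ]
          rfl
  have hsum_mul : ∑ i ∈ range k, roundingProb w k i * w i =
      2 * (∑ i ∈ range k, w i) / roundingDenom w k := by
    rw [sum_congr rfl fun i hi =>
        roundingProb_mul_self (mem_range.1 hi) (hw i (mem_range.1 hi)).ne',
      ← sum_div, sum_sub_distrib, sum_const, card_range, nsmul_eq_mul, ← mul_sum]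
    ring
  simp only [mul_add, sum_add_distrib, ← sum_mul, hsum, one_mul, hsum_mul]

theorem sum_erase_roundingProb_mul_add (hw : ∀ i < k, 0 < w i) {j : ℕ} (hj : j < k) :
    ∑ i ∈ (range k).erase j, roundingProb w k i * (w j + w i) =
      (1 + 2 * ((k : ℝ) - 2) / roundingDenom w k) * w j := by
  rw [sum_erase_eq_sub (mem_range.2 hj), sum_roundingProb_mul_add hw (by omega),
    mul_add, roundingProb_mul_self hj (hw j hj).ne']
  ring

theorem sum_roundingProb_mul_of_subset {s t : Finset ℕ} (hst : s ⊆ t)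
    (hk : ∀ i ∈ t, i ∉ s → k ≤ i) (f : ℕ → ℝ) :
    ∑ i ∈ s, roundingProb w k i * f i = ∑ i ∈ t, roundingProb w k i * f i :=
  sum_subset hst fun i hit his => by rw [roundingProb_eq_zero (hk i hit his), zero_mul]

end

theorem sum_erase_roundingProb_mul_add_le {w : ℕ → ℝ} {n k : ℕ} (hn : 2 ≤ n)
    (hw : ∀ i < n, 0 < w i) (hmono : ∀ i j, i ≤ j → j < n → w i ≤ w j) (hkn : k ≤ n)
    (hmax : ∀ k' ≤ n, IsGoodIndex w k' → k' ≤ k) {j : ℕ} (hj : j < n) :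
    ∑ i ∈ (range n).erase j, roundingProb w k i * (w j + w i) ≤ (2 - 2 / n) * w j := by
  have hk : 2 ≤ k :=
    hmax 2 hn (isGoodIndex_of_le_three (fun i hi => (hw i (by omega)).le) (by norm_num))
  have hwk : ∀ i < k, 0 < w i := fun i hi => hw i (by omega)
  have hsum_le : ∑ i ∈ (range n).erase j, roundingProb w k i * (w j + w i) ≤
      (1 + 2 * ((k : ℝ) - 2) / roundingDenom w k) * w j := by
    rcases lt_or_ge j k with hjk | hkj
    · rw [← sum_roundingProb_mul_of_subset (erase_subset_erase _ (range_subset_range.2 hkn))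
        (fun i hi hi' => by simp_all), sum_erase_roundingProb_mul_add hwk hjk]
    · rw [← sum_roundingProb_mul_of_subset (s := range k)
        (fun i hi => mem_erase.2 ⟨by simp at hi; omega, by simp at hi ⊢; omega⟩)
        (fun i _ hi => by simpa using hi), sum_roundingProb_mul_add hwk (by omega)]
      have hnot : ¬ IsGoodIndex w (k + 1) := fun h => by
        have := hmax (k + 1) (by omega) h
        omega
      have hk2 : (0 : ℝ) ≤ k - 2 := by
        have : (2 : ℝ) ≤ k := by exact_mod_cast hk
        linarith
      have hD : ∑ i ∈ range k, w i ≤ ((k : ℝ) - 2) * w j :=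
        (sum_range_lt_of_not_isGoodIndex_succ (by omega) (fun i hi => hmono i k hi (by omega))
          hnot).le.trans (mul_le_mul_of_nonneg_left (hmono k j hkj hj) hk2)
      have hΔ := roundingDenom_pos hwk (by omega)
      rw [add_mul, one_mul, div_mul_eq_mul_div, mul_assoc]
      gcongr
  have hkn' : (k : ℝ) ≤ n := by exact_mod_cast hkn
  have hk0 : (0 : ℝ) < k := by positivity
  calc _ ≤ (1 + 2 * ((k : ℝ) - 2) / roundingDenom w k) * w j := hsum_le
    _ ≤ (2 - 2 / n) * w j := by
      gcongr ?_ * _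
      · exact (hw j hj).le
      · linarith [two_mul_sub_two_div_roundingDenom_le hwk hk,
          div_le_div_of_nonneg_left (by norm_num : (0 : ℝ) ≤ 2) hk0 hkn']

theorem rounding_robust_to_noise (n : ℕ) (hn : 2 ≤ n) (ε : ℝ) (hε : 0 ≤ ε)
    (W Wh : ℕ → ℝ)
    (hpos : ∀ i, i < n → 0 < W i)
    (hWhmono : ∀ i j, i ≤ j → j < n → Wh i ≤ Wh j)
    (happrox : ∀ i, i < n → W i ≤ Wh i ∧ Wh i ≤ W i + ε)
    (k : ℕ) (hkn : k ≤ n)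
    (hgood : IsGoodIndex Wh k)
    (hmax : ∀ k', k' ≤ n → IsGoodIndex Wh k' → k' ≤ k)
    (D' C' : ℝ)
    (hD' : D' = ∑ i ∈ Finset.range k, Wh i)
    (hC' : C' = ∑ i ∈ Finset.range k, (Wh i)⁻¹)
    (q : ℕ → ℝ)
    (hq : ∀ i, q i = if i < k then
        (D' / Wh i - ((k : ℝ) - 2)) / (D' * C' - (k : ℝ) * ((k : ℝ) - 2)) else 0) :
    ∀ istar ∈ Finset.range n,
      ∑ i ∈ (Finset.range n).erase istar, q i * (W istar + W i)
        ≤ (2 - 2 / (n : ℝ)) * W istar + 2 * ε := by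
  intro istar histar
  rw [mem_range] at histar
  have hWh : ∀ i < n, 0 < Wh i := fun i hi => (hpos i hi).trans_le (happrox i hi).1
  obtain rfl : q = roundingProb Wh k := funext fun i => by rw [hq i, hD', hC']; rfl
  have hn' : 2 / (n : ℝ) ≤ 2 := div_le_self zero_le_two (by exact_mod_cast (by omega : 1 ≤ n))
  calc _ ≤ ∑ i ∈ (range n).erase istar, roundingProb Wh k i * (Wh istar + Wh i) := by
        refine sum_le_sum fun i hi => ?_
        have hin : i < n := mem_range.1 (mem_of_mem_erase hi)
        gcongr
        · exact roundingProb_nonneg (fun i hi => hWh i (by omega)) hgood i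
        · exact (happrox istar histar).1
        · exact (happrox i hin).1
    _ ≤ (2 - 2 / n) * Wh istar :=
        sum_erase_roundingProb_mul_add_le hn hWh hWhmono hkn hmax histar
    _ ≤ (2 - 2 / n) * (W istar + ε) :=
        mul_le_mul_of_nonneg_left (happrox istar histar).2 (by linarith)
    _ ≤ _ := by
        rw [mul_add]
        gcongr
        exact sub_le_self _ (by positivity)
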